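/- Let L be a Lie algebra, V an L-module, and ad : Λ^{n-1}V → L an L-module morphism such that the induced map (v_1,…,v_n) ↦ ad(v_1 ∧ … ∧ v_{n-1})·v_n from V^{⊗n} to V is alternating. Then V with the bracket [v_1,…,v_n] := ad(v_1 ∧ … ∧ v_{n-1})·v_n is an n-Lie (Filippov) algebra. -/
import Mathlib


/-- The `(n+1)`-ary bracket on `V` induced by an `L`-module morphism
`ad : Λⁿ V → L`, namely `[v₁,…,v_{n+1}] = ad(v₁ ∧ … ∧ vₙ) · v_{n+1}`. -/
def inducedBracket {k L V : Type*} [Field k] [LieRing L] [LieAlgebra k L]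
    [AddCommGroup V] [Module k V] [LieRingModule L V] [LieModule k L V] {n : ℕ}
    (ad : AlternatingMap k V L (Fin n)) (x : Fin (n + 1) → V) : V :=
  ⁅ad (Fin.init x), x (Fin.last n)⁆

/-- Let `L` be a Lie algebra, `V` an `L`-module and `ad : Λⁿ V → L` an `L`-module
morphism (equivariance `heq`) such that the induced `(n+1)`-linear map
`(v₁,…,v_{n+1}) ↦ ad(v₁ ∧ … ∧ vₙ) · v_{n+1}` is alternating (`hskew`).  Then `V`
with this bracket is an `(n+1)`-Lie (Filippov) algebra: the bracket is alternating
and satisfies the generalized Jacobi identity. -/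
theorem inducedBracket_is_filippov {k L V : Type*} [Field k] [LieRing L]
    [LieAlgebra k L] [AddCommGroup V] [Module k V] [LieRingModule L V]
    [LieModule k L V] {n : ℕ} (ad : AlternatingMap k V L (Fin n))
    (heq : ∀ (g : L) (v : Fin n → V),
      ∑ i : Fin n, ad (Function.update v i ⁅g, v i⁆) = ⁅g, ad v⁆)
    (hskew : ∀ (v : Fin n → V) (i : Fin n), ⁅ad v, v i⁆ = 0) :
    (∀ (x : Fin (n + 1) → V) (i j : Fin (n + 1)), i ≠ j → x i = x j →
        inducedBracket ad x = 0) ∧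
      ∀ (x : Fin (n + 1) → V) (y : Fin n → V),
        ⁅ad y, inducedBracket ad x⁆ =
          ∑ i : Fin (n + 1), inducedBracket ad (Function.update x i ⁅ad y, x i⁆) := by
  constructor
  · intro x i j hij hx
    unfold inducedBracket
    induction i using Fin.lastCases with
    | last =>
      induction j using Fin.lastCases with
      | last => exact absurd rfl hij
      | cast j =>
        have := hskew (Fin.init x) j
        rw [show Fin.init x j = x (Fin.last n) from hx.symm] at this
        exact this
    | cast i =>
      induction j using Fin.lastCases with
      | last =>
        have := hskew (Fin.init x) i
        rw [show Fin.init x i = x (Fin.last n) from hx] at this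
        exact this
      | cast j =>
        have hne : i ≠ j := fun h => hij (by rw [h])
        have : ad (Fin.init x) = 0 :=
          ad.map_eq_zero_of_eq _ (i := i) (j := j) hx hne
        rw [this, zero_lie]
  · intro x y
    unfold inducedBracket
    rw [leibniz_lie, ← heq (ad y) (Fin.init x), Fin.sum_univ_castSucc]
    have hs : ∀ (f : Fin n → L) (m : V), ⁅∑ i : Fin n, f i, m⁆ = ∑ i : Fin n, ⁅f i, m⁆ :=
      fun f m => map_sum (AddMonoidHom.mk' (fun g : L => ⁅g, m⁆) fun a b => add_lie a b m) f _
    rw [Function.update_self, Fin.init_update_last, hs]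
    congr 1
    refine Finset.sum_congr rfl fun i _ => ?_
    rw [Fin.init_update_castSucc, Function.update_of_ne (Fin.castSucc_lt_last i).ne']
    rfl
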